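/- Let α1, α2, α3, θ1, θ2, θ3 be positive real numbers with θ1 < θ2 < θ3, and set a_n = α1·θ1^n + α2·θ2^n + α3·θ3^n for all n ≥ 0. Then {√(a_n)}_{n=0}^∞ is a Stieltjes moment sequence if and only if θ2² = θ1·θ3 and α2² = 4·α1·α3. -/

import Mathlib

open MeasureTheory

/-- The closed support of a Borel measure: the set of points all of whose open
neighbourhoods have positive measure. -/
def msupport {X : Type*} [TopologicalSpace X] [MeasurableSpace X] (μ : Measure X) : Set X :=
  {x | ∀ U : Set X, IsOpen U → x ∈ U → 0 < μ U}

/-- `μ` is a representing measure (on `[0,∞)`, modelled as a measure on `ℝ` vanishing on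
`(-∞,0)`) of the Stieltjes moment sequence `a`. -/
def IsRepMeas (a : ℕ → ℝ) (μ : Measure ℝ) : Prop :=
  (∀ n, 0 ≤ a n) ∧ μ (Set.Iio 0) = 0 ∧
    ∀ n : ℕ, ∫⁻ x, ENNReal.ofReal (x ^ n) ∂μ = ENNReal.ofReal (a n)

/-- `a` is a Stieltjes moment sequence. -/
def IsStieltjes (a : ℕ → ℝ) : Prop :=
  ∃ μ : Measure ℝ, IsRepMeas a μ

/-- A Stieltjes moment sequence is determinate if it has a unique representing measure. -/
def IsDeterminate (a : ℕ → ℝ) : Prop :=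
  ∀ μ ν : Measure ℝ, IsRepMeas a μ → IsRepMeas a ν → μ = ν

/-!
If `μ` represents `√aₙ`, then the multiplicative convolution `μ ∗ₘ μ` represents `aₙ`. All the
sequences involved grow at most geometrically, so their representing measures live on compact
intervals, where Weierstrass approximation makes them unique; hence
`μ ∗ₘ μ = α₁ δ_{θ₁} + α₂ δ_{θ₂} + α₃ δ_{θ₃}`. Products of two points of the support of `μ` lie in
the support of `μ ∗ₘ μ`, which forces `μ` to be carried by two points `x < y` with `x² = θ₁`,
`xy = θ₂`, `y² = θ₃`. With `b = μ{x}` and `c = μ{y}`, comparing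
`aₙ = (b xⁿ + c yⁿ)² = b² θ₁ⁿ + 2bc θ₂ⁿ + c² θ₃ⁿ` with the definition of `aₙ` at `n = 0, 1, 2`
gives `α₁ = b²`, `α₂ = 2bc`, `α₃ = c²`. Conversely, the two relations give
`√aₙ = √α₁ (√θ₁)ⁿ + √α₃ (√θ₃)ⁿ`, the moment sequence of two atoms.
-/

open Measure Set Filter Topology
open scoped ENNReal

section Determinacy

variable {μ ν : Measure ℝ} {a b : ℝ}

lemma integrable_of_ae_mem_Icc [IsFiniteMeasure μ] (hμ : ∀ᵐ x ∂μ, x ∈ Icc a b) {g : ℝ → ℝ}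
    (hg : Continuous g) : Integrable g μ := by
  rw [← restrict_eq_self_of_ae_mem hμ]
  exact hg.integrableOn_Icc

lemma integral_eval_eq_of_integral_pow_eq [IsFiniteMeasure μ] [IsFiniteMeasure ν]
    (hμ : ∀ᵐ x ∂μ, x ∈ Icc a b) (hν : ∀ᵐ x ∂ν, x ∈ Icc a b)
    (h : ∀ n : ℕ, ∫ x, x ^ n ∂μ = ∫ x, x ^ n ∂ν) (p : Polynomial ℝ) :
    ∫ x, p.eval x ∂μ = ∫ x, p.eval x ∂ν := by
  simp only [Polynomial.eval_eq_sum_range]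
  rw [integral_finsetSum _ fun i _ => integrable_of_ae_mem_Icc hμ (by fun_prop),
    integral_finsetSum _ fun i _ => integrable_of_ae_mem_Icc hν (by fun_prop)]
  simp only [integral_const_mul, h]

/-- Weierstrass approximation transfers the equality of moments to all continuous functions. -/
lemma ext_of_integral_pow_eq [IsFiniteMeasure μ] [IsFiniteMeasure ν]
    (hμ : ∀ᵐ x ∂μ, x ∈ Icc a b) (hν : ∀ᵐ x ∂ν, x ∈ Icc a b)
    (h : ∀ n : ℕ, ∫ x, x ^ n ∂μ = ∫ x, x ^ n ∂ν) : μ = ν := by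
  refine ext_of_forall_integral_eq_of_IsFiniteMeasure fun f => eq_of_forall_dist_le fun ε hε => ?_
  set K := μ.real univ + ν.real univ
  obtain ⟨p, hp⟩ := exists_polynomial_near_of_continuousOn a b f f.continuous.continuousOn
    (ε / (K + 1)) (by positivity)
  have hclose : ∀ (ρ : Measure ℝ) [IsFiniteMeasure ρ], (∀ᵐ x ∂ρ, x ∈ Icc a b) →
      dist (∫ x, f x ∂ρ) (∫ x, p.eval x ∂ρ) ≤ ε / (K + 1) * ρ.real univ := by
    intro ρ _ hρ
    rw [dist_eq_norm, ← integral_sub (integrable_of_ae_mem_Icc hρ (by fun_prop))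
      (integrable_of_ae_mem_Icc hρ (by fun_prop))]
    refine norm_integral_le_of_norm_le_const ?_
    filter_upwards [hρ] with x hx
    rw [Real.norm_eq_abs, abs_sub_comm]
    exact (hp x hx).le
  calc dist (∫ x, f x ∂μ) (∫ x, f x ∂ν)
      ≤ dist (∫ x, f x ∂μ) (∫ x, p.eval x ∂μ) + dist (∫ x, f x ∂ν) (∫ x, p.eval x ∂ν) := by
        rw [integral_eval_eq_of_integral_pow_eq hμ hν h p]
        exact dist_triangle_right _ _ _
    _ ≤ ε / (K + 1) * μ.real univ + ε / (K + 1) * ν.real univ :=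
        add_le_add (hclose μ hμ) (hclose ν hν)
    _ = ε * (K / (K + 1)) := by ring
    _ ≤ ε := mul_le_of_le_one_right hε.le ((div_le_one (by positivity)).2 (by linarith))

end Determinacy

lemma ae_le_of_lintegral_ofReal_pow_le {μ : Measure ℝ} {C T : ℝ} (hT : 0 ≤ T)
    (h : ∀ n : ℕ, ∫⁻ x, ENNReal.ofReal (x ^ n) ∂μ ≤ ENNReal.ofReal (C * T ^ n)) :
    ∀ᵐ x ∂μ, x ≤ T := by
  have hle : ∀ t, T < t → ∀ᵐ x ∂μ, x ≤ t := by
    intro t ht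
    have ht0 : 0 < t := hT.trans_lt ht
    have hmarkov : ∀ n : ℕ, μ {x | t < x} ≤ ENNReal.ofReal (C * (T / t) ^ n) := by
      intro n
      have := (mul_meas_ge_le_lintegral (μ := μ) (by fun_prop : Measurable fun x : ℝ =>
        ENNReal.ofReal (x ^ n)) (ENNReal.ofReal (t ^ n))).trans (h n)
      rw [div_pow, ← mul_div_assoc, ENNReal.ofReal_div_of_pos (by positivity),
        ENNReal.le_div_iff_mul_le (by simp [ht0]) (by simp), mul_comm]
      refine le_trans (mul_le_mul_right (measure_mono fun x hx => ?_) _) this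
      exact ENNReal.ofReal_le_ofReal (pow_le_pow_left₀ ht0.le (le_of_lt hx) n)
    have hlim : Tendsto (fun n : ℕ => ENNReal.ofReal (C * (T / t) ^ n)) atTop (𝓝 0) := by
      simpa using ENNReal.tendsto_ofReal ((tendsto_pow_atTop_nhds_zero_of_lt_one
        (div_nonneg hT ht0.le) ((div_lt_one ht0).2 ht)).const_mul C)
    simpa [ae_iff] using ge_of_tendsto' hlim hmarkov
  filter_upwards [ae_all_iff.2 fun k : ℕ =>
    hle (T + 1 / (k + 1)) (lt_add_of_pos_right T (by positivity))] with x hx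
  simpa using ge_of_tendsto' (tendsto_one_div_add_atTop_nhds_zero_nat.const_add T) hx

section MulConvolution

variable {M : Type*} [Monoid M] [MeasurableSpace M] [MeasurableMul₂ M] {μ ν : Measure M}

lemma ae_mconv_of_ae [SFinite μ] [SFinite ν] {p q r : M → Prop} (hr : MeasurableSet {z | r z})
    (hpq : ∀ x y, p x → q y → r (x * y)) (hμ : ∀ᵐ x ∂μ, p x) (hν : ∀ᵐ y ∂ν, q y) :
    ∀ᵐ z ∂(μ ∗ₘ ν), r z := by
  refine (ae_map_iff measurable_mul.aemeasurable hr).2 ?_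
  filter_upwards [quasiMeasurePreserving_fst.ae hμ, quasiMeasurePreserving_snd.ae hν]
    with z hx hy
  exact hpq _ _ hx hy

lemma mul_mem_support_mconv [TopologicalSpace M] [ContinuousMul M] [OpensMeasurableSpace M]
    [SFinite ν] {x y : M} (hx : x ∈ μ.support) (hy : y ∈ ν.support) :
    x * y ∈ (μ ∗ₘ ν).support := by
  rw [support_eq_forall_isOpen] at hx hy ⊢
  intro U hU hUo
  obtain ⟨V, W, hVo, hWo, hxV, hyW, hVW⟩ :=
    isOpen_prod_iff.1 (hUo.preimage continuous_mul) x y hU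
  rw [mconv, map_apply measurable_mul hUo.measurableSet]
  calc 0 < μ V * ν W := ENNReal.mul_pos (hx V hxV hVo).ne' (hy W hyW hWo).ne'
    _ = μ.prod ν (V ×ˢ W) := (prod_prod V W).symm
    _ ≤ _ := measure_mono hVW

end MulConvolution

lemma ae_mem_Icc_mconv {μ ν : Measure ℝ} [SFinite μ] [SFinite ν] {a b c d : ℝ}
    (ha : 0 ≤ a) (hc : 0 ≤ c) (hμ : ∀ᵐ x ∂μ, x ∈ Icc a b) (hν : ∀ᵐ y ∂ν, y ∈ Icc c d) :
    ∀ᵐ z ∂(μ ∗ₘ ν), z ∈ Icc (a * c) (b * d) :=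
  ae_mconv_of_ae measurableSet_Icc (fun _ _ hx hy => ⟨mul_le_mul hx.1 hy.1 hc (ha.trans hx.1),
    mul_le_mul hx.2 hy.2 (hc.trans hy.1) ((ha.trans hx.1).trans hx.2)⟩) hμ hν

lemma lintegral_ofReal_pow_mconv {μ ν : Measure ℝ} [SFinite ν] (hμ : ∀ᵐ x ∂μ, 0 ≤ x) (n : ℕ) :
    ∫⁻ z, ENNReal.ofReal (z ^ n) ∂(μ ∗ₘ ν) =
      (∫⁻ x, ENNReal.ofReal (x ^ n) ∂μ) * ∫⁻ y, ENNReal.ofReal (y ^ n) ∂ν := by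
  rw [lintegral_mconv (by fun_prop), ← lintegral_mul_const _ (by fun_prop)]
  refine lintegral_congr_ae ?_
  filter_upwards [hμ] with x hx
  rw [← lintegral_const_mul _ (by fun_prop)]
  simp_rw [mul_pow, ENNReal.ofReal_mul (pow_nonneg hx n)]

lemma support_smul_dirac {X : Type*} [TopologicalSpace X] [T1Space X] [MeasurableSpace X]
    [OpensMeasurableSpace X] {c : ℝ≥0∞} (hc : c ≠ 0) (x : X) :
    (c • dirac x).support = {x} := by
  ext y
  simp only [support_eq_forall_isOpen, mem_ofPred_eq, mem_singleton_iff, Measure.smul_apply]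
  refine ⟨fun h => ?_, ?_⟩
  · by_contra hyx
    simpa [dirac_apply' x isOpen_compl_singleton.measurableSet] using
      h {x}ᶜ hyx isOpen_compl_singleton
  · rintro rfl U hU -
    simp [dirac_apply_of_mem hU, pos_iff_ne_zero, hc]

lemma lintegral_of_ae_mem_pair {X : Type*} [MeasurableSpace X] [MeasurableSingletonClass X]
    {μ : Measure X} {x y : X} (hxy : x ≠ y) (h : ∀ᵐ t ∂μ, t ∈ ({x, y} : Set X))
    (f : X → ℝ≥0∞) :
    ∫⁻ t, f t ∂μ = f x * μ {x} + f y * μ {y} := by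
  rw [← restrict_eq_self_of_ae_mem h, lintegral_insert (by simpa using hxy),
    lintegral_singleton, restrict_eq_self_of_ae_mem h]

namespace IsRepMeas

variable {b c : ℕ → ℝ} {μ ν : Measure ℝ}

lemma measure_univ (h : IsRepMeas b μ) : μ univ = ENNReal.ofReal (b 0) := by
  simpa using h.2.2 0

lemma isFiniteMeasure (h : IsRepMeas b μ) : IsFiniteMeasure μ :=
  ⟨by simp [h.measure_univ]⟩

lemma ae_nonneg (h : IsRepMeas b μ) : ∀ᵐ x ∂μ, 0 ≤ x :=
  ae_iff.2 (by simp only [not_le]; exact h.2.1)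

lemma integral_pow (h : IsRepMeas b μ) (n : ℕ) : ∫ x, x ^ n ∂μ = b n := by
  rw [integral_eq_lintegral_of_nonneg_ae (h.ae_nonneg.mono fun x hx => pow_nonneg hx n)
    (by fun_prop), h.2.2 n, ENNReal.toReal_ofReal (h.1 n)]

lemma ae_mem_Icc {C T : ℝ} (h : IsRepMeas b μ) (hT : 0 ≤ T) (hb : ∀ n, b n ≤ C * T ^ n) :
    ∀ᵐ x ∂μ, x ∈ Icc 0 T := by
  filter_upwards [h.ae_nonneg, ae_le_of_lintegral_ofReal_pow_le hT fun n =>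
    (h.2.2 n).trans_le (ENNReal.ofReal_le_ofReal (hb n))] with x h0 hT using ⟨h0, hT⟩

lemma ae_mem_Icc_sqrt {C T : ℝ} (h : IsRepMeas (fun n => √(b n)) μ) (hC : 0 ≤ C) (hT : 0 ≤ T)
    (hb : ∀ n, b n ≤ C * T ^ n) : ∀ᵐ x ∂μ, x ∈ Icc 0 √T :=
  h.ae_mem_Icc (C := √C) (Real.sqrt_nonneg _) fun n => Real.sqrt_le_iff.2 ⟨by positivity, by
    rw [mul_pow, Real.sq_sqrt hC, ← pow_mul, mul_comm n 2, pow_mul, Real.sq_sqrt hT]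
    exact hb n⟩

lemma add (hμ : IsRepMeas b μ) (hν : IsRepMeas c ν) : IsRepMeas (b + c) (μ + ν) :=
  ⟨fun n => add_nonneg (hμ.1 n) (hν.1 n), by simp [hμ.2.1, hν.2.1], fun n => by
    rw [lintegral_add_measure, hμ.2.2, hν.2.2, Pi.add_apply, ENNReal.ofReal_add (hμ.1 n) (hν.1 n)]⟩

lemma mconv (hμ : IsRepMeas b μ) (hν : IsRepMeas c ν) : IsRepMeas (b * c) (μ ∗ₘ ν) := by
  have := hμ.isFiniteMeasure
  have := hν.isFiniteMeasure
  refine ⟨fun n => mul_nonneg (hμ.1 n) (hν.1 n), ?_, fun n => ?_⟩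
  · have h := ae_mconv_of_ae measurableSet_Ici (fun _ _ => mul_nonneg) hμ.ae_nonneg hν.ae_nonneg
    simp only [ae_iff, not_le] at h
    exact h
  · rw [lintegral_ofReal_pow_mconv hμ.ae_nonneg, hμ.2.2, hν.2.2, Pi.mul_apply,
      ENNReal.ofReal_mul (hμ.1 n)]

lemma eq_add_of_ae_mem_pair {x y : ℝ} (h : IsRepMeas b μ) (hx : 0 ≤ x) (hy : 0 ≤ y)
    (hxy : x ≠ y) (hμ : ∀ᵐ t ∂μ, t ∈ ({x, y} : Set ℝ)) (n : ℕ) :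
    b n = μ.real {x} * x ^ n + μ.real {y} * y ^ n := by
  have := h.isFiniteMeasure
  have hn := h.2.2 n
  rw [lintegral_of_ae_mem_pair hxy hμ, ← ofReal_measureReal, ← ofReal_measureReal,
    ← ENNReal.ofReal_mul (by positivity), ← ENNReal.ofReal_mul (by positivity),
    ← ENNReal.ofReal_add (by positivity) (by positivity)] at hn
  rw [← (ENNReal.ofReal_eq_ofReal_iff (by positivity) (h.1 n)).1 hn]
  ring

end IsRepMeas

lemma isRepMeas_smul_dirac {c x : ℝ} (hc : 0 ≤ c) (hx : 0 ≤ x) :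
    IsRepMeas (fun n => c * x ^ n) (ENNReal.ofReal c • dirac x) :=
  ⟨fun n => by positivity, by simp [dirac_apply' _ measurableSet_Iio, hx.not_gt], fun n => by
    rw [lintegral_smul_measure, lintegral_dirac, smul_eq_mul, ENNReal.ofReal_mul hc]⟩

lemma isDeterminate_of_le_mul_pow {b : ℕ → ℝ} {C T : ℝ} (hT : 0 ≤ T)
    (hb : ∀ n, b n ≤ C * T ^ n) : IsDeterminate b := fun μ ν hμ hν => by
  have := hμ.isFiniteMeasure
  have := hν.isFiniteMeasure
  exact ext_of_integral_pow_eq (hμ.ae_mem_Icc hT hb) (hν.ae_mem_Icc hT hb) fun n => by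
    rw [hμ.integral_pow, hν.integral_pow]

lemma exists_pair_of_support_mconv_self {μ : Measure ℝ} [SFinite μ] {T θ1 θ2 θ3 : ℝ}
    (hμ0 : μ ≠ 0) (hμ : ∀ᵐ x ∂μ, x ∈ Icc 0 T) (hθ1 : 0 < θ1) (h12 : θ1 < θ2) (h23 : θ2 < θ3)
    (hsupp : (μ ∗ₘ μ).support = {θ1, θ2, θ3}) :
    ∃ x y, 0 ≤ x ∧ 0 ≤ y ∧ x * x = θ1 ∧ x * y = θ2 ∧ y * y = θ3 ∧
      ∀ᵐ t ∂μ, t ∈ ({x, y} : Set ℝ) := by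
  set S := μ.support
  have hST : S ⊆ Icc 0 T := support_subset_of_isClosed isClosed_Icc hμ
  have hbelow : BddBelow S := ⟨0, fun z hz => (hST hz).1⟩
  have habove : BddAbove S := ⟨T, fun z hz => (hST hz).2⟩
  set x := sInf S
  set y := sSup S
  have hxS : x ∈ S := isClosed_support.csInf_mem (nonempty_support hμ0) hbelow
  have hyS : y ∈ S := isClosed_support.csSup_mem (nonempty_support hμ0) habove
  have hSxy : S ⊆ Icc x y := fun z hz => ⟨csInf_le hbelow hz, le_csSup habove hz⟩
  have hx0 : 0 ≤ x := (hST hxS).1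
  have hxy_le : x ≤ y := (hSxy hxS).2
  have hmul : ∀ u ∈ S, ∀ v ∈ S, u * v = θ1 ∨ u * v = θ2 ∨ u * v = θ3 := fun u hu v hv => by
    simpa [hsupp] using mul_mem_support_mconv hu hv
  have hconc : ∀ᵐ t ∂μ, t ∈ Icc x y := mem_of_superset support_mem_ae hSxy
  -- `μ ∗ₘ μ` lives on `[x², y²]`, so its extreme atoms `θ1` and `θ3` can only be `x²` and `y²`
  have hΘ : ({θ1, θ2, θ3} : Set ℝ) ⊆ Icc (x * x) (y * y) :=
    hsupp ▸ support_subset_of_isClosed isClosed_Icc (ae_mem_Icc_mconv hx0 hx0 hconc hconc)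
  have hθ1_mem := hΘ (by simp : θ1 ∈ _)
  have hθ3_mem := hΘ (by simp : θ3 ∈ _)
  have hxx : x * x = θ1 := by rcases hmul x hxS x hxS with h | h | h <;> linarith [hθ1_mem.1]
  have hyy : y * y = θ3 := by rcases hmul y hyS y hyS with h | h | h <;> linarith [hθ3_mem.2]
  have hx_pos : 0 < x := by nlinarith
  have hxy_lt : x < y := hxy_le.lt_of_ne fun h => by rw [h] at hxx; linarith
  have hxy : x * y = θ2 := by
    have : x * x < x * y := by nlinarith
    have : x * y < y * y := by nlinarith
    rcases hmul x hxS y hyS with h | h | h <;> linarith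
  refine ⟨x, y, hx0, hx0.trans hxy_le, hxx, hxy, hyy, ?_⟩
  filter_upwards [support_mem_ae (μ := μ)] with z hz
  have hz' := hSxy hz
  by_contra hne
  simp only [mem_insert_iff, mem_singleton_iff, not_or] at hne
  have : x * x < x * z := by nlinarith [lt_of_le_of_ne hz'.1 (Ne.symm hne.1)]
  have : x * z < x * y := by nlinarith [lt_of_le_of_ne hz'.2 hne.2]
  rcases hmul x hxS z hz with h | h | h <;> linarith

lemma eq_of_sum_three_pow_eq {θ1 θ2 θ3 α1 α2 α3 β1 β2 β3 : ℝ}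
    (h12 : θ1 ≠ θ2) (h13 : θ1 ≠ θ3) (h23 : θ2 ≠ θ3)
    (h : ∀ n < 3, α1 * θ1 ^ n + α2 * θ2 ^ n + α3 * θ3 ^ n =
      β1 * θ1 ^ n + β2 * θ2 ^ n + β3 * θ3 ^ n) :
    α1 = β1 ∧ α2 = β2 ∧ α3 = β3 := by
  have h0 := h 0 (by norm_num)
  have h1 := h 1 (by norm_num)
  have h2 := h 2 (by norm_num)
  simp only [pow_zero, mul_one, pow_one] at h0 h1
  have h12' := sub_ne_zero.2 h12
  have h13' := sub_ne_zero.2 h13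
  have h23' := sub_ne_zero.2 h23
  refine ⟨mul_right_cancel₀ (mul_ne_zero h12' h13') ?_,
    mul_right_cancel₀ (mul_ne_zero h12' h23') ?_, mul_right_cancel₀ (mul_ne_zero h13' h23') ?_⟩
  · linear_combination h2 - (θ2 + θ3) * h1 + θ2 * θ3 * h0
  · linear_combination -h2 + (θ1 + θ3) * h1 - θ1 * θ3 * h0
  · linear_combination h2 - (θ1 + θ2) * h1 + θ1 * θ2 * h0

theorem sq_eq_of_isStieltjes_sqrt {α1 α2 α3 θ1 θ2 θ3 : ℝ}
    (hα1 : 0 < α1) (hα2 : 0 < α2) (hα3 : 0 < α3) (hθ1 : 0 < θ1) (h12 : θ1 < θ2) (h23 : θ2 < θ3)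
    (h : IsStieltjes fun n => √(α1 * θ1 ^ n + α2 * θ2 ^ n + α3 * θ3 ^ n)) :
    θ2 ^ 2 = θ1 * θ3 ∧ α2 ^ 2 = 4 * α1 * α3 := by
  obtain ⟨μ, hμ⟩ := h
  set a : ℕ → ℝ := fun n => α1 * θ1 ^ n + α2 * θ2 ^ n + α3 * θ3 ^ n
  have hθ2 : 0 < θ2 := hθ1.trans h12
  have hθ3 : 0 < θ3 := hθ2.trans h23
  have ha_nonneg : ∀ n, 0 ≤ a n := fun n => by positivity
  have ha_le : ∀ n, a n ≤ (α1 + α2 + α3) * θ3 ^ n := fun n => by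
    have := pow_le_pow_left₀ hθ1.le (h12.trans h23).le n
    have := pow_le_pow_left₀ hθ2.le h23.le n
    nlinarith
  have : IsFiniteMeasure μ := hμ.isFiniteMeasure
  have hμT : ∀ᵐ x ∂μ, x ∈ Icc 0 √θ3 := hμ.ae_mem_Icc_sqrt (by positivity) hθ3.le ha_le
  set ν := ENNReal.ofReal α1 • dirac θ1 + ENNReal.ofReal α2 • dirac θ2 +
    ENNReal.ofReal α3 • dirac θ3
  have hν : IsRepMeas a ν := ((isRepMeas_smul_dirac hα1.le hθ1.le).add
    (isRepMeas_smul_dirac hα2.le hθ2.le)).add (isRepMeas_smul_dirac hα3.le hθ3.le)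
  have hπ : μ ∗ₘ μ = ν := by
    refine isDeterminate_of_le_mul_pow hθ3.le ha_le _ _ ?_ hν
    convert hμ.mconv hμ using 1
    exact funext fun n => (Real.mul_self_sqrt (ha_nonneg n)).symm
  have hν_supp : ν.support = {θ1, θ2, θ3} := by
    simp only [ν, support_add, support_smul_dirac (ENNReal.ofReal_pos.2 hα1).ne',
      support_smul_dirac (ENNReal.ofReal_pos.2 hα2).ne',
      support_smul_dirac (ENNReal.ofReal_pos.2 hα3).ne', insert_eq, union_assoc]
  have hμ0 : μ ≠ 0 := by
    rw [← measure_univ_pos, hμ.measure_univ]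
    exact ENNReal.ofReal_pos.2 (Real.sqrt_pos.2 (by positivity))
  obtain ⟨x, y, hx, hy, hxx, hxy, hyy, hμxy⟩ :=
    exists_pair_of_support_mconv_self hμ0 hμT hθ1 h12 h23 (hπ ▸ hν_supp)
  have hsqrt := hμ.eq_add_of_ae_mem_pair hx hy (fun h => by rw [h] at hxx; linarith) hμxy
  obtain ⟨h1, h2, h3⟩ := eq_of_sum_three_pow_eq (β1 := μ.real {x} ^ 2)
    (β2 := 2 * μ.real {x} * μ.real {y}) (β3 := μ.real {y} ^ 2)
    h12.ne (h12.trans h23).ne h23.ne fun n _ => by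
      show a n = _
      rw [← Real.sq_sqrt (ha_nonneg n), hsqrt, ← hxx, ← hxy, ← hyy]
      ring
  exact ⟨by rw [← hxx, ← hxy, ← hyy]; ring, by rw [h1, h2, h3]; ring⟩

theorem isStieltjes_sqrt_of_sq_eq {α1 α2 α3 θ1 θ2 θ3 : ℝ}
    (hα1 : 0 ≤ α1) (hα2 : 0 ≤ α2) (hα3 : 0 ≤ α3) (hθ1 : 0 ≤ θ1) (hθ2 : 0 ≤ θ2) (hθ3 : 0 ≤ θ3)
    (hθ : θ2 ^ 2 = θ1 * θ3) (hα : α2 ^ 2 = 4 * α1 * α3) :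
    IsStieltjes fun n => √(α1 * θ1 ^ n + α2 * θ2 ^ n + α3 * θ3 ^ n) := by
  obtain ⟨b, hb, rfl⟩ : ∃ b, 0 ≤ b ∧ α1 = b ^ 2 := ⟨√α1, by positivity, (Real.sq_sqrt hα1).symm⟩
  obtain ⟨c, hc, rfl⟩ : ∃ c, 0 ≤ c ∧ α3 = c ^ 2 := ⟨√α3, by positivity, (Real.sq_sqrt hα3).symm⟩
  obtain ⟨x, hx, rfl⟩ : ∃ x, 0 ≤ x ∧ θ1 = x ^ 2 := ⟨√θ1, by positivity, (Real.sq_sqrt hθ1).symm⟩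
  obtain ⟨y, hy, rfl⟩ : ∃ y, 0 ≤ y ∧ θ3 = y ^ 2 := ⟨√θ3, by positivity, (Real.sq_sqrt hθ3).symm⟩
  obtain rfl : α2 = 2 * b * c :=
    (pow_left_inj₀ hα2 (by positivity) two_ne_zero).1 (by rw [hα]; ring)
  obtain rfl : θ2 = x * y :=
    (pow_left_inj₀ hθ2 (by positivity) two_ne_zero).1 (by rw [hθ]; ring)
  have hsqrt : (fun n => √(b ^ 2 * (x ^ 2) ^ n + 2 * b * c * (x * y) ^ n + c ^ 2 * (y ^ 2) ^ n)) =
      (fun n => b * x ^ n) + fun n => c * y ^ n := by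
    funext n
    rw [Pi.add_apply, ← Real.sqrt_sq (by positivity : 0 ≤ b * x ^ n + c * y ^ n)]
    congr 1
    ring
  exact ⟨_, hsqrt ▸ (isRepMeas_smul_dirac hb hx).add (isRepMeas_smul_dirac hc hy)⟩

theorem stmt19 (α1 α2 α3 θ1 θ2 θ3 : ℝ)
    (hα1 : 0 < α1) (hα2 : 0 < α2) (hα3 : 0 < α3)
    (hθ1 : 0 < θ1) (h12 : θ1 < θ2) (h23 : θ2 < θ3) :
    IsStieltjes (fun n => Real.sqrt (α1 * θ1 ^ n + α2 * θ2 ^ n + α3 * θ3 ^ n)) ↔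
      (θ2 ^ 2 = θ1 * θ3 ∧ α2 ^ 2 = 4 * α1 * α3) :=
  ⟨sq_eq_of_isStieltjes_sqrt hα1 hα2 hα3 hθ1 h12 h23, fun ⟨hθ, hα⟩ =>
    isStieltjes_sqrt_of_sq_eq hα1.le hα2.le hα3.le hθ1.le (hθ1.trans h12).le
      (hθ1.trans (h12.trans h23)).le hθ hα⟩
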